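/- arXiv:2509.25572 — 4 statements merged into one kernel-verified Lean document; each statement's English description precedes it below -/
import Mathlib

section
/- For all natural numbers p with p ≥ 1, the Gamma function satisfies Γ((p+1)/2) ≤ (4 + √2)^p · √(p!). -/
open Nat

lemma cb_le_aux (k : ℕ) : (2 * k).choose k ≤ 4 ^ k := by
  calc (2 * k).choose k ≤ ∑ i ∈ Finset.range (2 * k + 1), (2 * k).choose i :=
        Finset.single_le_sum (fun i _ => Nat.zero_le _) (Finset.mem_range.mpr (by omega))
    _ = 2 ^ (2 * k) := Nat.sum_range_choose _
    _ = 4 ^ k := by rw [pow_mul]; norm_num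

lemma fact_sq_le_aux (k : ℕ) : k ! * k ! ≤ (2 * k)! := by
  have h := Nat.choose_mul_factorial_mul_factorial (show k ≤ 2 * k by omega)
  rw [show 2 * k - k = k by omega] at h
  have h1 : 1 ≤ (2 * k).choose k := Nat.choose_pos (by omega)
  nlinarith [Nat.factorial_pos k]

lemma fact_le_aux (k : ℕ) : ((2 * k)! : ℝ) ≤ 4 ^ k * (k ! : ℝ) ^ 2 := by
  have h := Nat.choose_mul_factorial_mul_factorial (show k ≤ 2 * k by omega)
  rw [show 2 * k - k = k by omega] at h
  have h1 := cb_le_aux k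
  have : ((2 * k)! : ℝ) = ((2 * k).choose k : ℝ) * (k ! : ℝ) ^ 2 := by
    rw [← h]; push_cast; ring
  rw [this]
  have h2 : ((2 * k).choose k : ℝ) ≤ (4 : ℝ) ^ k := by exact_mod_cast h1
  have h3 : (0 : ℝ) ≤ (k ! : ℝ) ^ 2 := by positivity
  nlinarith

lemma Gamma_half_aux (k : ℕ) :
    Real.Gamma ((k : ℝ) + 1 / 2) = Real.sqrt Real.pi * (2 * k)! / (4 ^ k * k !) := by
  induction k with
  | zero =>
    simp only [Nat.cast_zero, zero_add, mul_zero, Nat.factorial_zero, pow_zero, Nat.cast_one]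
    rw [Real.Gamma_one_half_eq]
    norm_num
  | succ n ih =>
    have h : ((n : ℝ) + 1) + 1 / 2 = ((n : ℝ) + 1 / 2) + 1 := by ring
    push_cast
    rw [h, Real.Gamma_add_one (by positivity), ih]
    have e1 : (2 * (n + 1))! = (2 * n + 2) * ((2 * n + 1) * (2 * n)!) := by
      rw [show 2 * (n + 1) = (2 * n + 1) + 1 by ring, Nat.factorial_succ, Nat.factorial_succ]
    have e2 : (n + 1)! = (n + 1) * n ! := Nat.factorial_succ n
    rw [e1, e2]
    push_cast
    have hn : (0 : ℝ) < (n ! : ℝ) := by exact_mod_cast Nat.factorial_pos n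
    field_simp
    ring

/-- `Γ((p+1)/2) ≤ (4 + √2)^p √(p!)` for `p ≥ 1`. -/
theorem stmt_4 (p : ℕ) (hp : 1 ≤ p) :
    Real.Gamma (((p : ℝ) + 1) / 2) ≤ (4 + Real.sqrt 2) ^ p * Real.sqrt (Nat.factorial p) := by
  have hs2 : (0 : ℝ) ≤ Real.sqrt 2 := Real.sqrt_nonneg 2
  rcases Nat.even_or_odd p with ⟨k, hk⟩ | ⟨k, hk⟩
  · -- even case: p = 2k, k ≥ 1
    have hk2 : p = 2 * k := by omega
    subst hk2
    have hk1 : 1 ≤ k := by omega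
    have harg : (((2 * k : ℕ) : ℝ) + 1) / 2 = (k : ℝ) + 1 / 2 := by push_cast; ring
    rw [harg, Gamma_half_aux]
    have hfpos : (0 : ℝ) < ((2 * k)! : ℝ) := by exact_mod_cast Nat.factorial_pos _
    have hkpos : (0 : ℝ) < (k ! : ℝ) := by exact_mod_cast Nat.factorial_pos _
    apply le_of_pow_le_pow_left₀ two_ne_zero (by positivity)
    rw [mul_pow, Real.sq_sqrt hfpos.le]
    rw [div_pow, mul_pow, mul_pow]
    rw [div_le_iff₀ (by positivity)]
    rw [Real.sq_sqrt Real.pi_pos.le]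
    have h1 : ((2 * k)! : ℝ) ^ 2 ≤ (4 ^ k * (k ! : ℝ) ^ 2) * ((2 * k)! : ℝ) := by
      have := fact_le_aux k
      nlinarith
    have h2 : ((4 : ℝ) + Real.sqrt 2) ^ (2 * k) ≥ 4 ^ (2 * k) :=
      pow_le_pow_left₀ (by norm_num) (by linarith) _
    calc Real.pi * ((2 * k)! : ℝ) ^ 2
        ≤ 4 * ((4 ^ k * (k ! : ℝ) ^ 2) * ((2 * k)! : ℝ)) := by
          have hpi : Real.pi ≤ 4 := by linarith [Real.pi_le_four]
          nlinarith [sq_nonneg ((2*k)! : ℝ)]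
      _ ≤ (4 ^ (2 * k)) ^ 2 * ((2 * k)! : ℝ) * ((4 ^ k) ^ 2 * (k ! : ℝ) ^ 2) := by
          have : (4 : ℝ) * 4 ^ k ≤ (4 ^ (2 * k)) ^ 2 * (4 ^ k) ^ 2 := by
            rw [← pow_mul, ← pow_mul, ← pow_add]
            calc (4 : ℝ) * 4 ^ k = 4 ^ (k + 1) := by ring
              _ ≤ 4 ^ (2 * k * 2 + k * 2) := by
                  apply pow_le_pow_right₀ (by norm_num); omega
          nlinarith [mul_le_mul_of_nonneg_right this
            (show (0:ℝ) ≤ (k ! : ℝ) ^ 2 * ((2 * k)! : ℝ) by positivity)]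
      _ ≤ (((4 : ℝ) + Real.sqrt 2) ^ (2 * k)) ^ 2 * ((2 * k)! : ℝ) * ((4 ^ k) ^ 2 * (k ! : ℝ) ^ 2) := by
          gcongr <;> linarith
  · -- odd case: p = 2k+1
    subst hk
    have harg : (((2 * k + 1 : ℕ) : ℝ) + 1) / 2 = (k : ℝ) + 1 := by push_cast; ring
    rw [harg, Real.Gamma_nat_eq_factorial]
    have h1 : (k ! : ℝ) ≤ Real.sqrt ((2 * k + 1)! : ℝ) := by
      rw [show (k ! : ℝ) = Real.sqrt ((k ! : ℝ) ^ 2) from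
        (Real.sqrt_sq (by positivity)).symm]
      apply Real.sqrt_le_sqrt
      have : k ! * k ! ≤ (2 * k + 1)! := le_trans (fact_sq_le_aux k)
        (Nat.factorial_le (by omega))
      have hc : (k ! : ℝ) * (k ! : ℝ) ≤ ((2 * k + 1)! : ℝ) := by exact_mod_cast this
      nlinarith [hc]
    calc (k ! : ℝ) ≤ Real.sqrt ((2 * k + 1)! : ℝ) := h1
      _ ≤ (4 + Real.sqrt 2) ^ (2 * k + 1) * Real.sqrt ((2 * k + 1)! : ℝ) := by
          nth_rewrite 1 [← one_mul (Real.sqrt _)]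
          exact mul_le_mul_of_nonneg_right (one_le_pow₀ (by linarith)) (Real.sqrt_nonneg _)
end

section
/- For fixed x > 0, the regularized lower incomplete gamma function P(s, x) := γ(s, x)/Γ(s) is strictly decreasing in s on (0, ∞), where γ(s,x) = ∫_0^x t^{s-1} e^{-t} dt. -/
open MeasureTheory Set

/-- The lower incomplete gamma function `γ(s,x) = ∫_0^x t^{s-1} e^{-t} dt`. -/
noncomputable def lowerGamma (s x : ℝ) : ℝ :=
  ∫ t in (0:ℝ)..x, t ^ (s - 1) * Real.exp (-t)

lemma gInt {s : ℝ} (hs : 0 < s) :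
    IntegrableOn (fun t : ℝ => t ^ (s - 1) * Real.exp (-t)) (Ioi 0) := by
  simpa [mul_comm] using Real.GammaIntegral_convergent hs

/-- For fixed `x > 0`, the regularized lower incomplete gamma function
`P(s,x) = γ(s,x)/Γ(s)` is strictly decreasing in `s` on `(0, ∞)`. -/
theorem stmt_6 (x : ℝ) (hx : 0 < x) :
    StrictAntiOn (fun s => lowerGamma s x / Real.Gamma s) (Set.Ioi (0 : ℝ)) := by
  intro s1 hs1 s2 hs2 h12
  simp only [Set.mem_Ioi] at hs1 hs2
  set f : ℝ → ℝ → ℝ := fun s t => t ^ (s - 1) * Real.exp (-t) with hf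
  set L : ℝ → ℝ := fun s => ∫ t in Ioc 0 x, f s t with hL
  set U : ℝ → ℝ := fun s => ∫ t in Ioi x, f s t with hU
  set δ := s2 - s1 with hδ
  have hδ0 : 0 < δ := sub_pos.mpr h12
  -- integrability
  have hIL : ∀ s, 0 < s → IntegrableOn (f s) (Ioc 0 x) := fun s hs =>
    (gInt hs).mono_set Ioc_subset_Ioi_self
  have hIU : ∀ s, 0 < s → IntegrableOn (f s) (Ioi x) := fun s hs =>
    (gInt hs).mono_set (Ioi_subset_Ioi hx.le)
  -- lowerGamma = L
  have hlg : ∀ s, lowerGamma s x = L s := fun s => by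
    rw [lowerGamma, intervalIntegral.integral_of_le hx.le]
  -- Gamma = L + U
  have hΓ : ∀ s, 0 < s → Real.Gamma s = L s + U s := by
    intro s hs
    rw [Real.Gamma_eq_integral hs]
    have h1 : (Ioi (0:ℝ)) = Ioc 0 x ∪ Ioi x := (Ioc_union_Ioi_eq_Ioi hx.le).symm
    rw [show (∫ t in Ioi (0:ℝ), Real.exp (-t) * t ^ (s-1)) = ∫ t in Ioi (0:ℝ), f s t by
      simp [hf, mul_comm], h1,
      setIntegral_union (Ioc_disjoint_Ioi le_rfl) measurableSet_Ioi (hIL s hs) (hIU s hs)]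
  -- pointwise factorization: for t > 0, f s2 t = t ^ δ * f s1 t
  have hfac : ∀ t : ℝ, 0 < t → f s2 t = t ^ δ * f s1 t := by
    intro t ht
    simp only [hf]
    rw [← mul_assoc, ← Real.rpow_add ht]
    ring_nf
    rw [hδ]; ring_nf
  -- L positivity
  have hLpos : ∀ s, 0 < s → 0 < L s := by
    intro s hs
    show 0 < ∫ t in Ioc 0 x, f s t
    rw [← intervalIntegral.integral_of_le hx.le]
    apply intervalIntegral.intervalIntegral_pos_of_pos_on
    · exact (intervalIntegrable_iff_integrableOn_Ioc_of_le hx.le).mpr (hIL s hs)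
    · intro t ht
      exact mul_pos (Real.rpow_pos_of_pos ht.1 _) (Real.exp_pos _)
    · exact hx
  -- U positivity
  have hUpos : ∀ s, 0 < s → 0 < U s := by
    intro s hs
    show 0 < ∫ t in Ioi x, f s t
    rw [setIntegral_pos_iff_support_of_nonneg_ae]
    · have : Ioi x ⊆ Function.support (f s) ∩ Ioi x := by
        intro t ht
        refine ⟨?_, ht⟩
        exact ne_of_gt (mul_pos (Real.rpow_pos_of_pos (hx.trans ht) _) (Real.exp_pos _))
      calc (0:ENNReal) < volume (Ioi x) := by simp [Real.volume_Ioi]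
        _ ≤ _ := measure_mono this
    · filter_upwards [ae_restrict_mem measurableSet_Ioi] with t ht
      exact le_of_lt (mul_pos (Real.rpow_pos_of_pos (hx.trans ht) _) (Real.exp_pos _))
    · exact hIU s hs
  -- key strict inequality: L s2 < x^δ * L s1
  have hkey1 : L s2 < x ^ δ * L s1 := by
    have heq : x ^ δ * L s1 - L s2 = ∫ t in Ioc 0 x, (x ^ δ - t ^ δ) * f s1 t := by
      show x ^ δ * (∫ t in Ioc 0 x, f s1 t) - (∫ t in Ioc 0 x, f s2 t) = _
      rw [← integral_const_mul, ← integral_sub ((hIL s1 hs1).const_mul _) (hIL s2 hs2)]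
      apply setIntegral_congr_fun measurableSet_Ioc
      intro t ht
      show x ^ δ * f s1 t - f s2 t = (x ^ δ - t ^ δ) * f s1 t
      rw [hfac t ht.1]; ring
    have hpos : 0 < ∫ t in Ioc 0 x, (x ^ δ - t ^ δ) * f s1 t := by
      rw [setIntegral_pos_iff_support_of_nonneg_ae]
      · have : Ioo 0 x ⊆ Function.support (fun t => (x ^ δ - t ^ δ) * f s1 t) ∩ Ioc 0 x := by
          intro t ht
          refine ⟨?_, ht.1, ht.2.le⟩
          have h1 : t ^ δ < x ^ δ := Real.rpow_lt_rpow ht.1.le ht.2 hδ0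
          exact ne_of_gt (mul_pos (sub_pos.mpr h1)
            (mul_pos (Real.rpow_pos_of_pos ht.1 _) (Real.exp_pos _)))
        calc (0:ENNReal) < volume (Ioo 0 x) := by simp [Real.volume_Ioo, hx]
          _ ≤ _ := measure_mono this
      · filter_upwards [ae_restrict_mem measurableSet_Ioc] with t ht
        have h1 : t ^ δ ≤ x ^ δ := Real.rpow_le_rpow ht.1.le ht.2 hδ0.le
        exact mul_nonneg (sub_nonneg.mpr h1)
          (mul_nonneg (Real.rpow_pos_of_pos ht.1 _).le (Real.exp_pos _).le)
      · have hi : IntegrableOn (fun t => x ^ δ * f s1 t - f s2 t) (Ioc 0 x) :=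
          ((hIL s1 hs1).const_mul _).sub (hIL s2 hs2)
        exact hi.congr_fun (fun t ht => by
          show x ^ δ * f s1 t - f s2 t = (x ^ δ - t ^ δ) * f s1 t
          rw [hfac t ht.1]; ring) measurableSet_Ioc
    linarith [heq ▸ hpos]
  -- key weak inequality: x^δ * U s1 ≤ U s2
  have hkey2 : x ^ δ * U s1 ≤ U s2 := by
    show x ^ δ * (∫ t in Ioi x, f s1 t) ≤ ∫ t in Ioi x, f s2 t
    rw [← integral_const_mul]
    apply setIntegral_mono_on ((hIU s1 hs1).const_mul _) (hIU s2 hs2) measurableSet_Ioi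
    intro t ht
    rw [hfac t (hx.trans ht)]
    have h1 : x ^ δ ≤ t ^ δ := Real.rpow_le_rpow hx.le (le_of_lt ht) hδ0.le
    exact mul_le_mul_of_nonneg_right h1
      (mul_nonneg (Real.rpow_pos_of_pos (hx.trans ht) _).le (Real.exp_pos _).le)
  -- combine
  have hΓ1 := hΓ s1 hs1
  have hΓ2 := hΓ s2 hs2
  have hΓ1pos := Real.Gamma_pos_of_pos hs1
  have hΓ2pos := Real.Gamma_pos_of_pos hs2
  simp only [hlg]
  rw [div_lt_div_iff₀ hΓ2pos hΓ1pos, hΓ1, hΓ2]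
  have hcross : L s2 * U s1 < L s1 * U s2 := by
    calc L s2 * U s1 < (x ^ δ * L s1) * U s1 :=
          mul_lt_mul_of_pos_right hkey1 (hUpos s1 hs1)
      _ = L s1 * (x ^ δ * U s1) := by ring
      _ ≤ L s1 * U s2 := mul_le_mul_of_nonneg_left hkey2 (hLpos s1 hs1).le
  nlinarith [hLpos s1 hs1, hLpos s2 hs2]
end

section
/- Let V be a finite index set with metric d and let L_{i,j} ≤ g·θ(d_c − d_{i,j}) where θ is the Heaviside step function (so L_{i,j} ≤ g if d_{i,j} ≤ d_c and L_{i,j} = 0 otherwise). Let N_D(d_c) := sup_{i∈V} |{j ∈ V : d_{i,j} ≤ d_c}|. Then for all ℓ ≥ 1 and i,j ∈ V, (L^ℓ)_{i,j} ≤ (e·g)^ℓ · N_D(d_c)^{ℓ-1} · e^{-d_{i,j}/d_c}. -/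
/-- Finite-range reproducing bound: if `L_{i,j} ≤ g θ(d_c - d_{i,j})` then
`(L^ℓ)_{i,j} ≤ (e g)^ℓ N_D(d_c)^{ℓ-1} e^{-d_{i,j}/d_c}`. -/
theorem stmt_10 {V : Type*} [Fintype V] [DecidableEq V]
    (d : V → V → ℝ) (hd0 : ∀ i, d i i = 0) (hdsymm : ∀ i j, d i j = d j i)
    (hdnn : ∀ i j, 0 ≤ d i j) (htri : ∀ i j k, d i k ≤ d i j + d j k)
    (dc g : ℝ) (hdc : 0 < dc) (hg : 0 ≤ g)
    (L : Matrix V V ℝ) (hLnn : ∀ i j, 0 ≤ L i j)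
    (hL1 : ∀ i j, d i j ≤ dc → L i j ≤ g)
    (hL2 : ∀ i j, dc < d i j → L i j = 0)
    (N : ℕ) (hN : ∀ i, (Finset.univ.filter (fun j => d i j ≤ dc)).card ≤ N)
    (ℓ : ℕ) (hℓ : 1 ≤ ℓ) (i j : V) :
    (L ^ ℓ) i j
      ≤ (Real.exp 1 * g) ^ ℓ * (N : ℝ) ^ (ℓ - 1) * Real.exp (-(d i j) / dc) := by
  have hpow_nn : ∀ (n : ℕ) (a b : V), 0 ≤ (L ^ n) a b := by
    intro n
    induction n with
    | zero => intro a b; simp [Matrix.one_apply]; split <;> norm_num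
    | succ m ih =>
      intro a b
      rw [pow_succ, Matrix.mul_apply]
      exact Finset.sum_nonneg fun k _ => mul_nonneg (ih a k) (hLnn k b)
  induction ℓ, hℓ using Nat.le_induction generalizing i j with
  | base =>
    simp only [pow_one, Nat.sub_self, pow_zero, mul_one]
    by_cases h : d i j ≤ dc
    · calc L i j ≤ g := hL1 i j h
        _ = 1 * g := (one_mul g).symm
        _ ≤ (Real.exp 1 * Real.exp (-(d i j) / dc)) * g := by
            apply mul_le_mul_of_nonneg_right _ hg
            rw [← Real.exp_add]
            apply Real.one_le_exp
            have h1 : d i j / dc ≤ 1 := (div_le_one hdc).mpr h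
            have h2 : 0 ≤ d i j / dc := div_nonneg (hdnn i j) hdc.le
            have : -(d i j) / dc = -(d i j / dc) := by ring
            rw [this]; linarith
        _ = Real.exp 1 * g * Real.exp (-(d i j) / dc) := by ring
    · rw [hL2 i j (not_le.mp h)]
      positivity
  | succ n hn IH =>
    rw [pow_succ', Matrix.mul_apply]
    set B : ℝ := (Real.exp 1 * g) ^ n * (N : ℝ) ^ (n - 1)
      * (Real.exp 1 * g * Real.exp (-(d i j) / dc)) with hB
    have hBnn : 0 ≤ B := by
      have := Real.exp_pos 1
      have := Real.exp_pos (-(d i j) / dc)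
      positivity
    have key : ∀ k ∈ Finset.univ, L i k * (L ^ n) k j ≤
        (if d i k ≤ dc then B else 0) := by
      intro k _
      by_cases h : d i k ≤ dc
      · simp only [if_pos h]
        have h1 : L i k ≤ g := hL1 i k h
        have h2 : (L ^ n) k j ≤ (Real.exp 1 * g) ^ n * (N : ℝ) ^ (n - 1)
            * Real.exp (-(d k j) / dc) := IH k j
        have h3 : Real.exp (-(d k j) / dc) ≤ Real.exp 1 * Real.exp (-(d i j) / dc) := by
          rw [← Real.exp_add]
          apply Real.exp_le_exp.mpr
          have htr := htri i k j
          have h4 : 1 + -(d i j) / dc = (dc - d i j) / dc := by field_simp; ring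
          rw [h4]
          exact (div_le_div_iff_of_pos_right hdc).mpr (by linarith)
        calc L i k * (L ^ n) k j
            ≤ g * ((Real.exp 1 * g) ^ n * (N : ℝ) ^ (n - 1) * Real.exp (-(d k j) / dc)) :=
              mul_le_mul h1 h2 (hpow_nn n k j) hg
          _ ≤ g * ((Real.exp 1 * g) ^ n * (N : ℝ) ^ (n - 1)
              * (Real.exp 1 * Real.exp (-(d i j) / dc))) := by
              apply mul_le_mul_of_nonneg_left _ hg
              apply mul_le_mul_of_nonneg_left h3
              positivity
          _ = B := by rw [hB]; ring
      · simp only [if_neg h]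
        rw [hL2 i k (not_le.mp h), zero_mul]
    calc ∑ k, L i k * (L ^ n) k j ≤ ∑ k, (if d i k ≤ dc then B else 0) :=
          Finset.sum_le_sum key
      _ = ((Finset.univ.filter (fun k => d i k ≤ dc)).card : ℝ) * B := by
          rw [← Finset.sum_filter, Finset.sum_const, nsmul_eq_mul]
      _ ≤ (N : ℝ) * B := by
          apply mul_le_mul_of_nonneg_right _ hBnn
          exact_mod_cast hN i
      _ = (Real.exp 1 * g) ^ (n + 1) * (N : ℝ) ^ (n + 1 - 1) * Real.exp (-(d i j) / dc) := by
          rw [hB]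
          have : (N : ℝ) * (N : ℝ) ^ (n - 1) = (N : ℝ) ^ n := by
            rw [← pow_succ']
            congr 1
            omega
          rw [pow_succ]
          simp only [Nat.add_sub_cancel]
          rw [← this]
          ring
end

section
/- Let M and q_0 be positive integers and let n_1, …, n_M be nonnegative integers satisfying Σ_{s=1}^M s·n_s = M and Σ_{s=1}^M n_s = q_0. Then Π_{s=1}^M n_s^{n_s} ≥ (q_0²/M)^{q_0} · e^{-5 q_0}, with the convention 0^0 = 1. -/
open Finset

/-- Legendre duality: `x log x ≥ t x - e^{t-1}` for `x ≥ 0`. -/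
lemma legendre_key (t x : ℝ) (hx : 0 ≤ x) :
    t * x - Real.exp (t - 1) ≤ x * Real.log x := by
  rcases eq_or_lt_of_le hx with h | h
  · rw [← h]
    simp
    positivity
  · have h1 : (t - 1 - Real.log x) + 1 ≤ Real.exp (t - 1 - Real.log x) :=
      Real.add_one_le_exp _
    have h2 : Real.exp (t - 1 - Real.log x) = Real.exp (t - 1) / x := by
      rw [Real.exp_sub, Real.exp_log h]
    rw [h2] at h1
    have h3 : x * (t - Real.log x) ≤ x * (Real.exp (t - 1) / x) := by
      apply mul_le_mul_of_nonneg_left _ hx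
      linarith
    rw [mul_div_cancel₀ _ (ne_of_gt h)] at h3
    nlinarith

lemma pow_self_eq_exp (n : ℕ) : ((n : ℝ)) ^ n = Real.exp (n * Real.log n) := by
  rcases Nat.eq_zero_or_pos n with h | h
  · simp [h]
  · rw [← Real.log_pow, Real.exp_log (by positivity)]

/-- Combinatorial lower bound: if `Σ s n_s = M` and `Σ n_s = q₀`, then
`Π_s n_s^{n_s} ≥ (q₀²/M)^{q₀} e^{-5 q₀}` (with `0^0 = 1`). -/
theorem stmt_13 (M q0 : ℕ) (hM : 0 < M) (hq0 : 0 < q0) (n : ℕ → ℕ)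
    (h1 : ∑ s ∈ Finset.Icc 1 M, s * n s = M)
    (h2 : ∑ s ∈ Finset.Icc 1 M, n s = q0) :
    ((q0 : ℝ) ^ 2 / M) ^ q0 * Real.exp (-(5 * q0)) ≤
      ∏ s ∈ Finset.Icc 1 M, (n s : ℝ) ^ (n s) := by
  have hM' : (0:ℝ) < M := by exact_mod_cast hM
  have hq' : (0:ℝ) < q0 := by exact_mod_cast hq0
  set C : ℝ := (q0 : ℝ) ^ 2 / M with hCdef
  have hC0 : 0 < C := by positivity
  set r : ℝ := Real.exp (-((q0:ℝ)/M)) with hrdef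
  have hr0 : 0 < r := Real.exp_pos _
  have hrlt : r < 1 := by
    rw [hrdef, Real.exp_lt_one_iff]
    have : (0:ℝ) < (q0:ℝ)/M := by positivity
    linarith
  have h1r : 0 < 1 - r := by linarith
  -- casts of constraints
  have S1 : ∑ s ∈ Icc 1 M, (s:ℝ) * (n s : ℝ) = M := by exact_mod_cast h1
  have S2 : ∑ s ∈ Icc 1 M, (n s : ℝ) = q0 := by exact_mod_cast h2
  -- the dual variables
  set t : ℕ → ℝ := fun s => Real.log C + 1 - s * q0 / M with htdef
  -- Step B : linear part
  have hB : ∑ s ∈ Icc 1 M, t s * (n s : ℝ) = q0 * Real.log C := by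
    have e1 : ∀ s ∈ Icc 1 M, t s * (n s : ℝ)
        = (Real.log C + 1) * (n s : ℝ) - ((q0:ℝ)/M) * ((s:ℝ) * (n s : ℝ)) := by
      intro s _; simp only [htdef]; ring
    rw [Finset.sum_congr rfl e1, Finset.sum_sub_distrib, ← Finset.mul_sum,
      ← Finset.mul_sum, S1, S2]
    field_simp
    ring
  -- geometric sum bound
  have hgeom : ∑ s ∈ Icc 1 M, r ^ s ≤ (M : ℝ) / q0 := by
    have e2 : ∑ s ∈ Icc 1 M, r ^ s = r * ∑ i ∈ range M, r ^ i := by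
      rw [show Icc 1 M = Ico 1 (M+1) by rw [Finset.Ico_add_one_right_eq_Icc],
        Finset.sum_Ico_eq_sum_range]
      simp only [Nat.add_sub_cancel]
      rw [Finset.mul_sum]
      exact Finset.sum_congr rfl fun i _ => by rw [pow_add, pow_one, mul_comm]
    have e3 : ∑ i ∈ range M, r ^ i = (1 - r ^ M) / (1 - r) := by
      rw [geom_sum_eq (ne_of_lt hrlt)]
      rw [div_eq_div_iff (sub_ne_zero.mpr (ne_of_lt hrlt)) (ne_of_gt h1r)]
      ring
    have hrM : (0:ℝ) ≤ r ^ M := by positivity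
    have step1 : (1 - r ^ M) / (1 - r) ≤ 1 / (1 - r) :=
      (div_le_div_iff_of_pos_right h1r).mpr (by linarith)
    have hexp : (q0:ℝ)/M + 1 ≤ Real.exp ((q0:ℝ)/M) := Real.add_one_le_exp _
    have hre : r * Real.exp ((q0:ℝ)/M) = 1 := by
      rw [hrdef, ← Real.exp_add]
      simp
    have h5 : r * ((q0:ℝ)/M + 1) ≤ 1 := by
      calc r * ((q0:ℝ)/M + 1) ≤ r * Real.exp ((q0:ℝ)/M) :=
            mul_le_mul_of_nonneg_left hexp hr0.le
        _ = 1 := hre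
    have h6 : (M:ℝ) * (r * ((q0:ℝ)/M + 1)) ≤ M * 1 :=
      mul_le_mul_of_nonneg_left h5 hM'.le
    have h7 : (M:ℝ) * (r * ((q0:ℝ)/M + 1)) = r * q0 + M * r := by
      field_simp
    calc ∑ s ∈ Icc 1 M, r ^ s = r * ((1 - r ^ M) / (1 - r)) := by rw [e2, e3]
      _ ≤ r * (1 / (1 - r)) := mul_le_mul_of_nonneg_left step1 hr0.le
      _ = r / (1 - r) := by ring
      _ ≤ (M:ℝ) / q0 := by
          rw [div_le_div_iff₀ h1r hq']
          nlinarith [h6, h7]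
  -- Step C : exponentials
  have hCe : ∀ s : ℕ, Real.exp (t s - 1) = C * r ^ s := by
    intro s
    have : t s - 1 = Real.log C + (s:ℕ) * (-((q0:ℝ)/M)) := by
      simp only [htdef]; ring
    rw [this, Real.exp_add, Real.exp_log hC0, Real.exp_nat_mul]
  have hCsum : ∑ s ∈ Icc 1 M, Real.exp (t s - 1) ≤ q0 := by
    calc ∑ s ∈ Icc 1 M, Real.exp (t s - 1) = C * ∑ s ∈ Icc 1 M, r ^ s := by
          rw [Finset.mul_sum]; exact Finset.sum_congr rfl fun s _ => hCe s
      _ ≤ C * ((M:ℝ)/q0) := mul_le_mul_of_nonneg_left hgeom hC0.le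
      _ = q0 := by rw [hCdef]; field_simp
  -- entropy lower bound
  have hsum : (q0:ℝ) * Real.log C - q0 ≤ ∑ s ∈ Icc 1 M, (n s : ℝ) * Real.log (n s) := by
    have h8 : ∑ s ∈ Icc 1 M, (t s * (n s:ℝ) - Real.exp (t s - 1))
        ≤ ∑ s ∈ Icc 1 M, (n s : ℝ) * Real.log (n s) :=
      Finset.sum_le_sum fun s _ => legendre_key (t s) (n s) (Nat.cast_nonneg _)
    rw [Finset.sum_sub_distrib, hB] at h8
    linarith
  -- conclude
  have hprod : ∏ s ∈ Icc 1 M, ((n s : ℝ)) ^ (n s)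
      = Real.exp (∑ s ∈ Icc 1 M, (n s : ℝ) * Real.log (n s)) := by
    rw [Real.exp_sum]
    exact Finset.prod_congr rfl fun s _ => pow_self_eq_exp (n s)
  have hlhs : C ^ q0 * Real.exp (-(5 * (q0:ℝ)))
      = Real.exp ((q0:ℝ) * Real.log C - 5 * q0) := by
    rw [show (q0:ℝ) * Real.log C - 5 * q0 = (q0:ℕ) * Real.log C + (-(5 * (q0:ℝ))) by push_cast; ring,
      Real.exp_add, Real.exp_nat_mul, Real.exp_log hC0]
  rw [hprod, hlhs, Real.exp_le_exp]
  nlinarith [hsum, hq']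
end
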